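/- Let R be a field, G a group, J a subgroup of G, and λ a simple R[J]-module. For g ∈ G, let ind_J^{JgJ} λ denote the R[J]-submodule of (ind_J^G λ)|_J spanned by the elements x ⊗ v with x ∈ JgJ and v ∈ λ, so that (ind_J^G λ)|_J = ⊕_{JgJ ∈ J\G/J} ind_J^{JgJ} λ. Then there is an R-linear isomorphism End_{R[G]}(ind_J^G λ) ≅ ⊕_{JgJ ∈ J\G/J} Hom_{R[J]}(λ, ind_J^{JgJ} λ), the sum being over the double cosets of J in G. -/

import Mathlib

set_option synthInstance.maxHeartbeats 1000000
set_option maxHeartbeats 1000000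

open Function

variable {R : Type*} [Field R] {G : Type*} [Group G]
variable {V : Type*} [AddCommGroup V] [Module R V]

/-- The induced module `ind_J^G λ`, modelled as the space of functions `f : G → V`
with `f (g * j) = σ j⁻¹ (f g)` supported on finitely many left cosets of `J`
(this is the usual model of `R[G] ⊗_{R[J]} V`, with `g ⊗ v` corresponding to the function
supported on `gJ` sending `g * j` to `σ j⁻¹ v`). -/
def indCarrier (J : Subgroup G) (σ : Representation R J V) : Submodule R (G → V) where
  carrier := {f | (∀ (g : G) (j : J), f (g * (j : G)) = σ j⁻¹ (f g)) ∧
      ((QuotientGroup.mk : G → G ⧸ J) '' Function.support f).Finite}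
  add_mem' := by
    rintro f g ⟨hf1, hf2⟩ ⟨hg1, hg2⟩
    refine ⟨fun x j => by simp [hf1, hg1], ?_⟩
    refine (hf2.union hg2).subset ?_
    rw [← Set.image_union]
    exact Set.image_mono (Function.support_add _ _)
  zero_mem' := ⟨fun g j => by simp, by simp⟩
  smul_mem' := by
    rintro c f ⟨hf1, hf2⟩
    refine ⟨fun g j => by simp [hf1], ?_⟩
    exact hf2.subset (Set.image_mono (Function.support_const_smul_subset c f))

/-- The representation of `G` on the induced module `ind_J^G λ`, by left translation:
`(x • f) (g) = f (x⁻¹ * g)`. -/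
def indRep (J : Subgroup G) (σ : Representation R J V) :
    Representation R G (indCarrier J σ) where
  toFun x :=
    { toFun := fun f => ⟨fun g => (f : G → V) (x⁻¹ * g), by
        refine ⟨fun g j => ?_, ?_⟩
        · show (f : G → V) (x⁻¹ * (g * (j : G))) = σ j⁻¹ ((f : G → V) (x⁻¹ * g))
          rw [← mul_assoc]
          exact f.2.1 _ j
        refine ((f.2.2).image (fun c : G ⧸ J => x • c)).subset ?_
        rintro c ⟨g, hg, rfl⟩
        refine ⟨QuotientGroup.mk (x⁻¹ * g), ⟨x⁻¹ * g, hg, rfl⟩, ?_⟩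
        show x • (QuotientGroup.mk (x⁻¹ * g) : G ⧸ J) = QuotientGroup.mk g
        rw [MulAction.Quotient.smul_mk, smul_eq_mul, mul_inv_cancel_left]⟩
      map_add' := fun f g => Subtype.ext (funext fun g' => rfl)
      map_smul' := fun c f => Subtype.ext (funext fun g' => rfl) }
  map_one' := by
    apply LinearMap.ext; intro f
    exact Subtype.ext (funext fun g => by simp)
  map_mul' := fun x y => by
    apply LinearMap.ext; intro f
    exact Subtype.ext (funext fun g => by simp [mul_assoc])

/-- The `R[J]`-submodule `ind_J^{JgJ} λ` of `(ind_J^G λ)|_J` consisting of the elements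
supported in the double coset `JgJ` (equivalently, spanned by the elements `x ⊗ v` with
`x ∈ JgJ` and `v ∈ λ`). -/
def indDouble (J : Subgroup G) (σ : Representation R J V) (g : G) :
    Submodule R (indCarrier J σ) where
  carrier := {f | ∀ x : G, x ∉ DoubleCoset.doubleCoset g (J : Set G) (J : Set G) → (f : G → V) x = 0}
  add_mem' := fun hf hg x hx => by
    show (_ : G → V) x + (_ : G → V) x = 0
    rw [hf x hx, hg x hx, add_zero]
  zero_mem' := fun x _ => rfl
  smul_mem' := fun c f hf x hx => by
    show c • (f : G → V) x = 0
    rw [hf x hx, smul_zero]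

/-- The endomorphism algebra `End_{R[G]}(ind_J^G λ)`, as the `R`-submodule of
`G`-equivariant elements of `End_R(ind_J^G λ)`. -/
def EndG (J : Subgroup G) (σ : Representation R J V) :
    Submodule R ((indCarrier J σ) →ₗ[R] (indCarrier J σ)) where
  carrier := {Φ | ∀ (x : G) (f : indCarrier J σ), Φ (indRep J σ x f) = indRep J σ x (Φ f)}
  add_mem' := fun hΦ hΨ x f => by simp [hΦ x f, hΨ x f]
  zero_mem' := fun x f => by simp
  smul_mem' := fun c Φ hΦ x f => by simp [hΦ x f]

instance {H : Type*} [Group H] (σ : Representation R H V) :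
    AddCommGroup σ.asModule := inferInstanceAs (AddCommGroup V)

/-- The space `Hom_{R[J]}(λ, ind_J^{JgJ} λ)` of `J`-equivariant linear maps from `λ` to
`ind_J^{JgJ} λ`. -/
def HomJ (J : Subgroup G) (σ : Representation R J V) (g : G) :
    Submodule R (V →ₗ[R] (indDouble J σ g)) where
  carrier := {φ | ∀ (j : J) (v : V),
    (↑(φ (σ j v)) : indCarrier J σ) = indRep J σ (j : G) ↑(φ v)}
  add_mem' := fun hφ hψ j v => by simp [hφ j v, hψ j v]
  zero_mem' := fun j v => by simp
  smul_mem' := fun c φ hφ j v => by simp [hφ j v]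

/-!
Composing with `ι : λ → ind λ`, `v ↦ 1 ⊗ v` (`indIncl`), identifies `End_{R[G]}(ind λ)` with
`Hom_J(λ, (ind λ)|_J)` (Frobenius reciprocity); the inverse sends `φ` to
`f ↦ ∑_{gJ ∈ G/J} g • φ (f g)`, whose terms depend only on `gJ` because `φ` is `J`-equivariant.
Restricting functions to double cosets writes every `f ∈ ind λ` as the finite sum of its
components in the `ind_J^{JgJ} λ`, so a `J`-map `λ → (ind λ)|_J` is determined by its components
`λ → ind_J^{JgJ} λ`. As `λ` is simple, a component vanishing at one `v₀ ≠ 0` vanishes, so only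
the finitely many double cosets meeting the support of `φ v₀` contribute: the components of `φ`
form an element of the direct sum, not just of the product.
-/

namespace DoubleCoset

variable {H K : Subgroup G}

lemma mk_mul_left {h : G} (hh : h ∈ H) (x : G) : mk H K (h * x) = mk H K x :=
  (eq H K _ _).2 ⟨h⁻¹, H.inv_mem hh, 1, K.one_mem, by group⟩

lemma mk_mul_right (x : G) {k : G} (hk : k ∈ K) : mk H K (x * k) = mk H K x :=
  (eq H K _ _).2 ⟨1, H.one_mem, k⁻¹, K.inv_mem hk, by group⟩

lemma mk_out_quotientGroupMk (x : G) : mk H K (x : G ⧸ K).out = mk H K x := by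
  obtain ⟨k, hk⟩ := QuotientGroup.mk_out_eq_mul K x
  rw [hk, mk_mul_right x k.2]

lemma mem_doubleCoset_out_iff {q : Quotient (H : Set G) K} {x : G} :
    x ∈ doubleCoset q.out H K ↔ mk H K x = q :=
  mem_quotToDoubleCoset_iff q x

end DoubleCoset

lemma Representation.eq_zero_of_apply_eq_zero {k H U W : Type*} [Field k] [Monoid H]
    [AddCommGroup U] [Module k U] [AddCommGroup W] [Module k W]
    {ρ : Representation k H U} {τ : Representation k H W}
    [IsSimpleModule (MonoidAlgebra k H) ρ.asModule] {f : U →ₗ[k] W}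
    (hf : ∀ h v, f (ρ h v) = τ h (f v)) {v : U} (hv : v ≠ 0) (hfv : f v = 0) : f = 0 := by
  have := (irreducible_iff_isSimpleModule_asModule ρ).2 ‹_›
  rcases IsIrreducible.injective_or_eq_zero (f.intertwiningMap_of_isIntertwiningMap ρ τ hf)
    with hinj | hzero
  · exact absurd (hinj (hfv.trans (map_zero f).symm)) hv
  · exact congrArg IntertwiningMap.toLinearMap hzero

section Frobenius

variable {J : Subgroup G} {σ : Representation R J V}

@[simp] lemma indRep_apply (x : G) (f : indCarrier J σ) (g : G) :
    (indRep J σ x f : G → V) g = (f : G → V) (x⁻¹ * g) := rfl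

lemma indCarrier_apply_mul (f : indCarrier J σ) (g : G) (j : J) :
    (f : G → V) (g * j) = σ j⁻¹ ((f : G → V) g) :=
  f.2.1 g j

lemma indCarrier_finsum_apply {ι : Type*} {F : ι → indCarrier J σ} (hF : (support F).Finite)
    (x : G) : ((∑ᶠ i, F i : indCarrier J σ) : G → V) x = ∑ᶠ i, (F i : G → V) x :=
  map_finsum ((LinearMap.proj x).comp (indCarrier J σ).subtype) hF

open scoped Classical in
variable (J σ) in
noncomputable def indIncl : V →ₗ[R] indCarrier J σ where
  toFun v := ⟨fun x => if h : x ∈ J then σ ⟨x, h⟩⁻¹ v else 0, by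
    refine ⟨fun g j => ?_, (Set.finite_singleton ((1 : G) : G ⧸ J)).subset ?_⟩
    · dsimp only
      by_cases hg : g ∈ J
      · have hgj : g * j ∈ J := J.mul_mem hg j.2
        have : (⟨g * j, hgj⟩ : J) = ⟨g, hg⟩ * j := rfl
        rw [dif_pos hg, dif_pos hgj, this, mul_inv_rev, map_mul, Module.End.mul_apply]
      · rw [dif_neg hg, dif_neg (mt (J.mul_mem_cancel_right j.2).1 hg), map_zero]
    · rintro _ ⟨x, hx, rfl⟩
      by_contra hxJ
      exact hx (dif_neg fun hx' => hxJ (QuotientGroup.eq.2 (by simpa using J.inv_mem hx')))⟩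
  map_add' v w := by
    ext x
    simp only [Submodule.coe_add, Pi.add_apply]
    split_ifs <;> simp
  map_smul' r v := by
    ext x
    simp only [SetLike.val_smul, Pi.smul_apply, RingHom.id_apply]
    split_ifs <;> simp

lemma indIncl_apply_of_mem (v : V) {x : G} (hx : x ∈ J) :
    (indIncl J σ v : G → V) x = σ ⟨x, hx⟩⁻¹ v :=
  dif_pos hx

lemma indIncl_apply_of_notMem (v : V) {x : G} (hx : x ∉ J) :
    (indIncl J σ v : G → V) x = 0 :=
  dif_neg hx

@[simp] lemma indIncl_apply_one (v : V) : (indIncl J σ v : G → V) 1 = v := by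
  rw [indIncl_apply_of_mem v J.one_mem]
  change σ 1⁻¹ v = v
  simp

lemma indIncl_map (j : J) (v : V) :
    indIncl J σ (σ j v) = indRep J σ j (indIncl J σ v) := by
  ext x
  rw [indRep_apply]
  by_cases hx : x ∈ J
  · have hjx : (j : G)⁻¹ * x ∈ J := J.mul_mem (J.inv_mem j.2) hx
    have : (⟨(j : G)⁻¹ * x, hjx⟩ : J)⁻¹ = (⟨x, hx⟩ : J)⁻¹ * j := by ext; simp
    rw [indIncl_apply_of_mem v hjx, indIncl_apply_of_mem _ hx, this, map_mul,
      Module.End.mul_apply]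
  · rw [indIncl_apply_of_notMem _ hx,
      indIncl_apply_of_notMem v (mt (J.mul_mem_cancel_left (J.inv_mem j.2)).1 hx)]

variable (J σ) in
/-- `Hom_J(λ, (ind_J^G λ)|_J)`. -/
def HomJRes : Submodule R (V →ₗ[R] indCarrier J σ) where
  carrier := {φ | ∀ (j : J) (v : V), φ (σ j v) = indRep J σ (j : G) (φ v)}
  add_mem' hφ hψ j v := by simp [hφ j v, hψ j v]
  zero_mem' j v := by simp
  smul_mem' c φ hφ j v := by simp [hφ j v]

lemma indIncl_mem_HomJRes : indIncl J σ ∈ HomJRes J σ := indIncl_map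

lemma HomJRes.indRep_mul_apply_mul {φ : V →ₗ[R] indCarrier J σ} (hφ : φ ∈ HomJRes J σ)
    (f : indCarrier J σ) (g : G) (j : J) :
    indRep J σ (g * j) (φ ((f : G → V) (g * j))) = indRep J σ g (φ ((f : G → V) g)) := by
  rw [indCarrier_apply_mul, hφ, ← Module.End.mul_apply, ← map_mul, InvMemClass.coe_inv,
    mul_inv_cancel_right]

noncomputable def indExtendTerm (φ : HomJRes J σ) (f : indCarrier J σ) :
    G ⧸ J → indCarrier J σ :=
  Quotient.lift (fun g => indRep J σ g (φ.1 ((f : G → V) g))) fun a b hab => by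
    obtain ⟨j, rfl⟩ : ∃ j : J, b = a * j :=
      ⟨⟨a⁻¹ * b, QuotientGroup.leftRel_apply.1 hab⟩, (mul_inv_cancel_left a b).symm⟩
    exact (HomJRes.indRep_mul_apply_mul φ.2 f a j).symm

@[simp] lemma indExtendTerm_mk (φ : HomJRes J σ) (f : indCarrier J σ) (g : G) :
    indExtendTerm φ f g = indRep J σ g (φ.1 ((f : G → V) g)) :=
  rfl

lemma finite_support_indExtendTerm (φ : HomJRes J σ) (f : indCarrier J σ) :
    (support (indExtendTerm φ f)).Finite := by
  refine f.2.2.subset fun c hc => ?_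
  induction c using QuotientGroup.induction_on with | H g =>
  exact ⟨g, fun hg => hc (by simp [hg]), rfl⟩

noncomputable def indExtend (φ : HomJRes J σ) : indCarrier J σ →ₗ[R] indCarrier J σ where
  toFun f := ∑ᶠ c, indExtendTerm φ f c
  map_add' f f' := by
    rw [← finsum_add_distrib (finite_support_indExtendTerm φ f)
      (finite_support_indExtendTerm φ f')]
    refine finsum_congr fun c => ?_
    induction c using QuotientGroup.induction_on
    simp
  map_smul' r f := by
    rw [RingHom.id_apply, smul_finsum' r (finite_support_indExtendTerm φ f)]
    refine finsum_congr fun c => ?_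
    induction c using QuotientGroup.induction_on
    simp

lemma indExtend_apply (φ : HomJRes J σ) (f : indCarrier J σ) :
    indExtend φ f = ∑ᶠ c, indExtendTerm φ f c :=
  rfl

lemma indExtend_mem_EndG (φ : HomJRes J σ) : indExtend φ ∈ EndG J σ := by
  intro x f
  rw [indExtend_apply, indExtend_apply, map_finsum _ (finite_support_indExtendTerm φ f),
    ← finsum_comp_equiv (MulAction.toPerm x)]
  refine finsum_congr fun c => ?_
  induction c using QuotientGroup.induction_on with | H g =>
  simp [MulAction.Quotient.smul_mk, ← Module.End.mul_apply, ← map_mul]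

lemma indExtend_apply_indIncl (φ : HomJRes J σ) (v : V) :
    indExtend φ (indIncl J σ v) = φ.1 v := by
  rw [indExtend_apply, finsum_eq_single _ ((1 : G) : G ⧸ J)]
  · simp
  · intro c hc
    induction c using QuotientGroup.induction_on with | H g =>
    have hg : g ∉ J := fun hg => hc (QuotientGroup.eq.2 (by simpa using J.inv_mem hg))
    simp [indIncl_apply_of_notMem v hg]

lemma indExtend_indIncl : indExtend ⟨indIncl J σ, indIncl_mem_HomJRes⟩ = LinearMap.id := by
  ext f x
  rw [indExtend_apply, indCarrier_finsum_apply (finite_support_indExtendTerm _ f),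
    finsum_eq_single _ (x : G ⧸ J)]
  · simp
  · intro c hc
    induction c using QuotientGroup.induction_on with | H g =>
    exact indIncl_apply_of_notMem _ fun hgx => hc (QuotientGroup.eq.2 hgx)

variable (J σ) in
noncomputable def compIndIncl : EndG J σ →ₗ[R] HomJRes J σ where
  toFun Φ := ⟨Φ.1 ∘ₗ indIncl J σ, fun j v => by
    simp only [LinearMap.comp_apply, indIncl_map]
    exact Φ.2 j _⟩
  map_add' _ _ := rfl
  map_smul' _ _ := rfl

lemma indExtend_compIndIncl (Φ : EndG J σ) : indExtend (compIndIncl J σ Φ) = Φ.1 := by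
  conv_rhs => rw [← LinearMap.comp_id Φ.1, ← indExtend_indIncl]
  ext f : 1
  rw [LinearMap.comp_apply, indExtend_apply, indExtend_apply,
    map_finsum _ (finite_support_indExtendTerm _ f)]
  refine finsum_congr fun c => ?_
  induction c using QuotientGroup.induction_on with | H g =>
  exact (Φ.2 g _).symm

variable (J σ) in
noncomputable def frobeniusReciprocity : EndG J σ ≃ₗ[R] HomJRes J σ :=
  { compIndIncl J σ with
    invFun φ := ⟨indExtend φ, indExtend_mem_EndG φ⟩
    left_inv Φ := Subtype.ext (indExtend_compIndIncl Φ)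
    right_inv φ := Subtype.ext (LinearMap.ext (indExtend_apply_indIncl φ)) }

end Frobenius

section DoubleCosetDecomposition

open DoubleCoset

variable {J : Subgroup G} {σ : Representation R J V}

open scoped Classical in
variable (J σ) in
noncomputable def restrictDouble (q : DoubleCoset.Quotient (J : Set G) J) :
    indCarrier J σ →ₗ[R] indCarrier J σ where
  toFun f := ⟨fun x => if mk J J x = q then (f : G → V) x else 0, by
    refine ⟨fun g j => ?_, f.2.2.subset (Set.image_mono fun x hx => ?_)⟩
    · simp only [mk_mul_right g j.2]
      split_ifs
      · exact indCarrier_apply_mul f g j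
      · rw [map_zero]
    · exact fun hfx => hx (by simp [hfx])⟩
  map_add' f f' := by
    ext x
    simp only [Submodule.coe_add, Pi.add_apply]
    split_ifs <;> simp
  map_smul' r f := by
    ext x
    simp only [SetLike.val_smul, Pi.smul_apply, RingHom.id_apply]
    split_ifs <;> simp

open scoped Classical in
lemma restrictDouble_apply (q : DoubleCoset.Quotient (J : Set G) J)
    (f : indCarrier J σ) (x : G) :
    (restrictDouble J σ q f : G → V) x = if mk J J x = q then (f : G → V) x else 0 :=
  rfl

lemma restrictDouble_indRep (q : DoubleCoset.Quotient (J : Set G) J) (j : J)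
    (f : indCarrier J σ) :
    restrictDouble J σ q (indRep J σ j f) = indRep J σ j (restrictDouble J σ q f) := by
  ext x
  simp only [restrictDouble_apply, indRep_apply]
  rw [mk_mul_left (J.inv_mem j.2)]

lemma restrictDouble_of_mem {q : DoubleCoset.Quotient (J : Set G) J} {f : indCarrier J σ}
    (hf : f ∈ indDouble J σ q.out) : restrictDouble J σ q f = f := by
  ext x
  rw [restrictDouble_apply]
  split_ifs with hx
  · rfl
  · exact (hf x (mt mem_doubleCoset_out_iff.1 hx)).symm

lemma restrictDouble_of_mem_of_ne {q q' : DoubleCoset.Quotient (J : Set G) J}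
    {f : indCarrier J σ} (hf : f ∈ indDouble J σ q'.out) (hq : q' ≠ q) :
    restrictDouble J σ q f = 0 := by
  ext x
  rw [restrictDouble_apply]
  split_ifs with hx
  · exact hf x fun hx' => hq (mem_doubleCoset_out_iff.1 hx' ▸ hx)
  · rfl

lemma finite_support_restrictDouble (f : indCarrier J σ) :
    (support fun q => restrictDouble J σ q f).Finite := by
  refine (f.2.2.image fun c => mk J J c.out).subset fun q hq => ?_
  obtain ⟨x, hx⟩ : ∃ x, (restrictDouble J σ q f : G → V) x ≠ 0 := by
    by_contra! h
    exact hq (Subtype.ext (funext h))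
  rw [restrictDouble_apply] at hx
  split_ifs at hx with hxq
  · exact ⟨x, ⟨x, hx, rfl⟩, (mk_out_quotientGroupMk x).trans hxq⟩
  · exact absurd rfl hx

lemma finsum_restrictDouble (f : indCarrier J σ) :
    ∑ᶠ q, restrictDouble J σ q f = f := by
  ext x
  rw [indCarrier_finsum_apply (finite_support_restrictDouble f), finsum_eq_single _ (mk J J x)]
  · simp [restrictDouble_apply]
  · intro q hq
    simp [restrictDouble_apply, hq.symm]

lemma HomJ.eq_zero_of_apply_eq_zero [IsSimpleModule (MonoidAlgebra R J) σ.asModule] {g : G}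
    {φ : V →ₗ[R] indDouble J σ g} (hφ : φ ∈ HomJ J σ g) {v : V} (hv : v ≠ 0) (hφv : φ v = 0) :
    φ = 0 := by
  have h := Representation.eq_zero_of_apply_eq_zero (τ := (indRep J σ).comp J.subtype)
    (f := (indDouble J σ g).subtype ∘ₗ φ) hφ hv (by simp [hφv])
  exact LinearMap.ext fun w => Subtype.ext (LinearMap.congr_fun h w)

variable (J σ) in
noncomputable def homJIncl (q : DoubleCoset.Quotient (J : Set G) J) :
    HomJ J σ q.out →ₗ[R] HomJRes J σ :=
  ((indDouble J σ q.out).subtype.compRight R).restrict fun _ hφ => hφ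

variable (J σ) in
noncomputable def homJProj (q : DoubleCoset.Quotient (J : Set G) J) :
    HomJRes J σ →ₗ[R] HomJ J σ q.out :=
  (((restrictDouble J σ q).codRestrict (indDouble J σ q.out) fun f x hx =>
    by simp [restrictDouble_apply, mem_doubleCoset_out_iff.not.1 hx]).compRight R).restrict
    fun φ hφ j v => by
      change restrictDouble J σ q (φ (σ j v)) = indRep J σ j (restrictDouble J σ q (φ v))
      rw [hφ j v, restrictDouble_indRep]

@[simp] lemma homJIncl_apply (q : DoubleCoset.Quotient (J : Set G) J) (φ : HomJ J σ q.out)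
    (v : V) :
    (homJIncl J σ q φ).1 v = (φ.1 v : indCarrier J σ) :=
  rfl

@[simp] lemma homJProj_apply (q : DoubleCoset.Quotient (J : Set G) J) (φ : HomJRes J σ)
    (v : V) :
    ((homJProj J σ q φ).1 v : indCarrier J σ) = restrictDouble J σ q (φ.1 v) :=
  rfl

lemma homJProj_homJIncl_self (q : DoubleCoset.Quotient (J : Set G) J) (φ : HomJ J σ q.out) :
    homJProj J σ q (homJIncl J σ q φ) = φ :=
  Subtype.ext (LinearMap.ext fun v => Subtype.ext (restrictDouble_of_mem (φ.1 v).2))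

lemma homJProj_homJIncl_of_ne {q q' : DoubleCoset.Quotient (J : Set G) J} (hq : q' ≠ q)
    (φ : HomJ J σ q'.out) : homJProj J σ q (homJIncl J σ q' φ) = 0 :=
  Subtype.ext (LinearMap.ext fun v => Subtype.ext (restrictDouble_of_mem_of_ne (φ.1 v).2 hq))

open scoped DirectSum

open scoped Classical in
variable (J σ) in
noncomputable def homJSum :
    (⨁ q : DoubleCoset.Quotient (J : Set G) J, HomJ J σ q.out) →ₗ[R] HomJRes J σ :=
  DirectSum.toModule R _ _ (homJIncl J σ)

open scoped Classical in
lemma homJProj_comp_homJSum (q : DoubleCoset.Quotient (J : Set G) J) :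
    homJProj J σ q ∘ₗ homJSum J σ = DirectSum.component R _ _ q := by
  refine DirectSum.linearMap_ext R fun q' => LinearMap.ext fun φ => ?_
  simp only [homJSum, LinearMap.comp_apply, DirectSum.toModule_lof]
  by_cases hq : q' = q
  · subst hq
    rw [homJProj_homJIncl_self, DirectSum.component.lof_self]
  · rw [homJProj_homJIncl_of_ne hq, DirectSum.component.of, dif_neg hq]

lemma homJSum_injective : Injective (homJSum J σ) := fun ψ ψ' h =>
  DirectSum.ext_component R fun q => by
    rw [← homJProj_comp_homJSum, LinearMap.comp_apply, h, ← LinearMap.comp_apply,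
      homJProj_comp_homJSum]

lemma homJSum_surjective [IsSimpleModule (MonoidAlgebra R J) σ.asModule] :
    Surjective (homJSum J σ) := by
  classical
  intro φ
  have := IsSimpleModule.nontrivial (MonoidAlgebra R J) σ.asModule
  obtain ⟨v₀, hv₀⟩ := exists_ne (0 : σ.asModule)
  have hfin : {q | homJProj J σ q φ ≠ 0}.Finite := by
    refine (finite_support_restrictDouble (φ.1 v₀)).subset fun q hq hzero => hq ?_
    exact Subtype.ext
      (HomJ.eq_zero_of_apply_eq_zero (homJProj J σ q φ).2 hv₀ (Subtype.ext hzero))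
  refine ⟨∑ q ∈ hfin.toFinset, DirectSum.lof R _ _ q (homJProj J σ q φ), ?_⟩
  ext v : 2
  simp only [map_sum, homJSum, DirectSum.toModule_lof, Submodule.coe_sum, LinearMap.sum_apply,
    homJIncl_apply, homJProj_apply]
  conv_rhs => rw [← finsum_restrictDouble (φ.1 v)]
  refine (finsum_eq_sum_of_support_subset _ fun q hq => ?_).symm
  rw [Set.Finite.coe_toFinset]
  exact fun hzero => hq (by dsimp only; rw [← homJProj_apply, hzero]; rfl)

end DoubleCosetDecomposition

open DirectSum in
/-- Let `R` be a field, `G` a group, `J` a subgroup of `G` and `λ` a simple `R[J]`-module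
(given as a representation `σ` of `J` on `V`).  There is an `R`-linear isomorphism
`End_{R[G]}(ind_J^G λ) ≅ ⊕_{JgJ ∈ J\G/J} Hom_{R[J]}(λ, ind_J^{JgJ} λ)`, the direct sum
being over the double cosets of `J` in `G` (with `Quot.out` as set of representatives). -/
theorem stmt_5 (J : Subgroup G) (σ : Representation R J V)
    (hsimple : IsSimpleModule (MonoidAlgebra R J) σ.asModule) :
    Nonempty ((EndG J σ) ≃ₗ[R]
      (⨁ q : DoubleCoset.Quotient (J : Set G) (J : Set G), HomJ J σ q.out)) :=
  ⟨(frobeniusReciprocity J σ).trans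
    (LinearEquiv.ofBijective (homJSum J σ) ⟨homJSum_injective, homJSum_surjective⟩).symm⟩
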